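/- Let X be a Banach lattice, ε ≥ 0, and let T : X → X be a bounded linear operator that is ε-band preserving. Then T is 2ε-disjointness preserving; that is, for all x, y ∈ X with ‖x‖ ≤ 1, ‖y‖ ≤ 1 and |x| ⊓ |y| = 0, one has ‖|T x| ⊓ |T y|‖ ≤ 2ε. -/

import Mathlib

/-!
Put `a = |T x| ⊓ |T y|` and split `a = a ⊓ n|x| + (a - n|x|)⁺`. The first piece lies below
`|T y|` and is disjoint from `y`, so its norm is at most `ε`. The second lies below `|T x|` and is
disjoint from the soft thresholding `x'` of `x` at level `a / n`, with `|x - x'| ≤ a / n`;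
writing `T x = T x' + T (x - x')` bounds its norm by `ε + ‖T‖ ‖a‖ / n`. Let `n → ∞`.
-/

/-- `T` is `ε`-band preserving. -/
def IsEpsBandPreserving {X : Type*} [NormedAddCommGroup X] [Lattice X]
    (ε : ℝ) (T : X → X) : Prop :=
  ∀ x y : X, 0 ≤ y → |x| ⊓ y = 0 → ‖|T x| ⊓ y‖ ≤ ε * ‖x‖

section LatticeOrderedGroup

variable {α : Type*} [Lattice α] [AddCommGroup α] [IsOrderedAddMonoid α]

lemma inf_add_le_inf_add_inf {z p q : α} (hz : 0 ≤ z) (hp : 0 ≤ p) (hq : 0 ≤ q) :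
    z ⊓ (p + q) ≤ z ⊓ p + z ⊓ q := by
  rw [inf_add, add_inf, add_inf]
  exact le_inf (le_inf (inf_le_left.trans (le_add_of_nonneg_left hz))
      (inf_le_left.trans (le_add_of_nonneg_right hq)))
    (le_inf (inf_le_left.trans (le_add_of_nonneg_left hp)) inf_le_right)

lemma nsmul_inf_eq_zero {u v : α} (hu : 0 ≤ u) (hv : 0 ≤ v) (huv : u ⊓ v = 0) (n : ℕ) :
    n • u ⊓ v = 0 := by
  induction n with
  | zero => simpa using hv
  | succ n ih =>
    refine le_antisymm ?_ (le_inf (nsmul_nonneg hu _) hv)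
    calc (n + 1) • u ⊓ v = v ⊓ (n • u + u) := by rw [succ_nsmul, inf_comm]
      _ ≤ v ⊓ (n • u) + v ⊓ u := inf_add_le_inf_add_inf hv (nsmul_nonneg hu n) hu
      _ = 0 := by rw [inf_comm, ih, inf_comm, huv, add_zero]

lemma posPart_nsmul_le (v : α) (n : ℕ) : (n • v)⁺ ≤ n • v⁺ :=
  sup_le (nsmul_le_nsmul_right (le_posPart v) n) (nsmul_nonneg (posPart_nonneg v) n)

lemma abs_sub_le_sup_of_nonneg {p q : α} (hp : 0 ≤ p) (hq : 0 ≤ q) : |p - q| ≤ p ⊔ q :=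
  abs_le'.2 ⟨le_sup_of_le_left (sub_le_self p hq),
    le_sup_of_le_right (by rw [neg_sub]; exact sub_le_self q hp)⟩

lemma posPart_le_abs (x : α) : x⁺ ≤ |x| := sup_le (le_abs_self x) (abs_nonneg x)

lemma negPart_le_abs (x : α) : x⁻ ≤ |x| := sup_le (neg_le_abs x) (abs_nonneg x)

/-- Soft thresholding at level `e`: in a function lattice, `x ↦ sign x * (|x| - e)⁺`. -/
def softThreshold (e x : α) : α := (x⁺ - e)⁺ - (x⁻ - e)⁺

lemma abs_softThreshold_le (e x : α) : |softThreshold e x| ≤ (|x| - e)⁺ :=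
  (abs_sub_le_sup_of_nonneg (posPart_nonneg _) (posPart_nonneg _)).trans <|
    sup_le (posPart_mono (sub_le_sub_right (posPart_le_abs x) e))
      (posPart_mono (sub_le_sub_right (negPart_le_abs x) e))

lemma abs_sub_softThreshold_le {e : α} (he : 0 ≤ e) (x : α) : |x - softThreshold e x| ≤ e := by
  have hsub : x - softThreshold e x = x⁺ ⊓ e - x⁻ ⊓ e := by
    rw [inf_eq_sub_posPart_sub, inf_eq_sub_posPart_sub, softThreshold]
    nth_rw 1 [← posPart_sub_negPart x]
    abel
  rw [hsub]
  exact (abs_sub_le_sup_of_nonneg (le_inf (posPart_nonneg x) he)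
    (le_inf (negPart_nonneg x) he)).trans (sup_le inf_le_right inf_le_right)

lemma abs_softThreshold_inf_eq_zero (e x : α) (n : ℕ) :
    |softThreshold e x| ⊓ (n • (e - |x|))⁺ = 0 := by
  have hdisj : n • (e - |x|)⁺ ⊓ (|x| - e)⁺ = 0 := by
    refine nsmul_inf_eq_zero (posPart_nonneg _) (posPart_nonneg _) ?_ n
    rw [← neg_sub, posPart_neg, inf_comm, posPart_inf_negPart_eq_zero]
  refine le_antisymm ?_ (le_inf (abs_nonneg _) (posPart_nonneg _))
  calc |softThreshold e x| ⊓ (n • (e - |x|))⁺ ≤ (|x| - e)⁺ ⊓ n • (e - |x|)⁺ :=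
        inf_le_inf (abs_softThreshold_le e x) (posPart_nsmul_le _ n)
    _ = 0 := by rw [inf_comm, hdisj]

end LatticeOrderedGroup

lemma le_of_forall_nat_le_add_div {a b C : ℝ} (h : ∀ n : ℕ, n ≠ 0 → a ≤ b + C / n) : a ≤ b := by
  have hlim : Filter.Tendsto (fun n : ℕ => b + C / n) Filter.atTop (nhds b) := by
    simpa using tendsto_const_nhds.add (tendsto_const_div_atTop_nhds_zero_nat C)
  exact ge_of_tendsto hlim (Filter.eventually_atTop.2 ⟨1, fun n hn => h n (by omega)⟩)

lemma norm_le_norm_of_nonneg_of_le {X : Type*} [NormedAddCommGroup X] [Lattice X]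
    [IsOrderedAddMonoid X] [HasSolidNorm X] {a b : X} (ha : 0 ≤ a) (hab : a ≤ b) : ‖a‖ ≤ ‖b‖ :=
  norm_le_norm_of_abs_le_abs <| by rwa [abs_of_nonneg ha, abs_of_nonneg (ha.trans hab)]

namespace IsEpsBandPreserving

variable {X : Type*} [NormedAddCommGroup X] [Lattice X] [IsOrderedAddMonoid X] {ε : ℝ}

lemma norm_inf_nsmul_abs_le {T : X → X} (hT : IsEpsBandPreserving ε T) {x y : X}
    (hxy : |x| ⊓ |y| = 0) (n : ℕ) : ‖|T y| ⊓ n • |x|‖ ≤ ε * ‖y‖ := by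
  refine hT y _ (nsmul_nonneg (abs_nonneg x) n) ?_
  rw [inf_comm]
  exact nsmul_inf_eq_zero (abs_nonneg x) (abs_nonneg y) hxy n

variable [HasSolidNorm X] [NormedSpace ℝ X] {T : X →L[ℝ] X}

lemma norm_inf_abs_apply_le (hT : IsEpsBandPreserving ε T) {z x' : X} (hz : 0 ≤ z)
    (hx' : |x'| ⊓ z = 0) (x : X) : ‖z ⊓ |T x|‖ ≤ ε * ‖x'‖ + ‖T‖ * ‖x - x'‖ := by
  have hperturb : ‖z ⊓ |T x| - z ⊓ |T x'|‖ ≤ ‖T‖ * ‖x - x'‖ := by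
    rw [inf_comm z, inf_comm z]
    calc ‖|T x| ⊓ z - |T x'| ⊓ z‖ ≤ ‖|T x| - |T x'|‖ := norm_inf_sub_inf_le_norm _ _ _
      _ ≤ ‖T x - T x'‖ := norm_abs_sub_abs _ _
      _ = ‖T (x - x')‖ := by rw [map_sub]
      _ ≤ ‖T‖ * ‖x - x'‖ := T.le_opNorm _
  have hbp : ‖z ⊓ |T x'|‖ ≤ ε * ‖x'‖ := by
    rw [inf_comm]
    exact hT x' z hz hx'
  linarith [norm_le_insert' (z ⊓ |T x|) (z ⊓ |T x'|)]

lemma norm_posPart_sub_nsmul_abs_le (hT : IsEpsBandPreserving ε T) (hε : 0 ≤ ε) {a e x : X}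
    (ha : a ≤ |T x|) (he : 0 ≤ e) {n : ℕ} (hae : a ≤ n • e) :
    ‖(a - n • |x|)⁺‖ ≤ ε * ‖x‖ + ‖T‖ * ‖e‖ := by
  set z := (a - n • |x|)⁺
  set x' := softThreshold e x
  have hz : 0 ≤ z := posPart_nonneg _
  have hzx' : |x'| ⊓ z = 0 := by
    refine le_antisymm ?_ (le_inf (abs_nonneg _) hz)
    rw [← abs_softThreshold_inf_eq_zero e x n]
    refine inf_le_inf_left _ (posPart_mono ?_)
    rw [nsmul_sub]
    exact sub_le_sub_right hae _
  have hx' : ‖x'‖ ≤ ‖x‖ := by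
    exact norm_le_norm_of_abs_le_abs
      ((abs_softThreshold_le e x).trans (sup_le (sub_le_self _ he) (abs_nonneg x)))
  have hxx' : ‖x - x'‖ ≤ ‖e‖ :=
    norm_le_norm_of_abs_le_abs (by rw [abs_of_nonneg he]; exact abs_sub_softThreshold_le he x)
  have hzTx : z ⊓ |T x| = z :=
    inf_eq_left.2 ((posPart_mono (sub_le_self a (nsmul_nonneg (abs_nonneg x) n))).trans
      (sup_le ha (abs_nonneg _)))
  calc ‖z‖ = ‖z ⊓ |T x|‖ := by rw [hzTx]
    _ ≤ ε * ‖x'‖ + ‖T‖ * ‖x - x'‖ := hT.norm_inf_abs_apply_le hz hzx' x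
    _ ≤ ε * ‖x‖ + ‖T‖ * ‖e‖ := by gcongr

end IsEpsBandPreserving

theorem epsBP_implies_two_eps_DP_general {X : Type*} [NormedAddCommGroup X] [Lattice X]
    [IsOrderedAddMonoid X] [HasSolidNorm X]
    [NormedSpace ℝ X] (ε : ℝ) (hε : 0 ≤ ε) (T : X →L[ℝ] X)
    (hT : IsEpsBandPreserving ε ⇑T) :
    ∀ x y : X, ‖x‖ ≤ 1 → ‖y‖ ≤ 1 → |x| ⊓ |y| = 0 → ‖|T x| ⊓ |T y|‖ ≤ 2 * ε := by
  intro x y hx hy hxy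
  set a := |T x| ⊓ |T y|
  refine le_of_forall_nat_le_add_div (C := ‖T‖ * ‖a‖) fun n hn => ?_
  -- `X` need not be an ordered `ℝ`-module, so `n⁻¹ • a ≥ 0` is not available; take `|n⁻¹ • a|`.
  set e := |(n : ℝ)⁻¹ • a|
  have hae : a ≤ n • e := by
    calc a = n • ((n : ℝ)⁻¹ • a) := by
          rw [← Nat.cast_smul_eq_nsmul ℝ, smul_inv_smul₀ (Nat.cast_ne_zero.2 hn)]
      _ ≤ n • e := nsmul_le_nsmul_right (le_abs_self _) n
  have he : ‖e‖ = ‖a‖ / n := by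
    rw [norm_abs_eq_norm, norm_smul, norm_inv, Real.norm_natCast, inv_mul_eq_div]
  have hband : ‖a ⊓ n • |x|‖ ≤ ε * ‖y‖ :=
    (norm_le_norm_of_nonneg_of_le (le_inf (le_inf (abs_nonneg _) (abs_nonneg _))
      (nsmul_nonneg (abs_nonneg x) n)) (inf_le_inf_right _ inf_le_right)).trans
      (hT.norm_inf_nsmul_abs_le hxy n)
  calc ‖a‖ = ‖a ⊓ n • |x| + (a - n • |x|)⁺‖ := by rw [inf_eq_sub_posPart_sub, sub_add_cancel]
    _ ≤ ε * ‖y‖ + (ε * ‖x‖ + ‖T‖ * ‖e‖) :=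
        (norm_add_le _ _).trans (add_le_add hband
          (hT.norm_posPart_sub_nsmul_abs_le hε inf_le_left (abs_nonneg _) hae))
    _ ≤ 2 * ε + ‖T‖ * ‖a‖ / n := by
        rw [he, mul_div_assoc]
        linarith [mul_le_mul_of_nonneg_left hx hε, mul_le_mul_of_nonneg_left hy hε]

/-- A bounded `ε`-band preserving operator on a Banach lattice is `2ε`-disjointness
preserving. -/
theorem epsBP_implies_two_eps_DP {X : Type*} [NormedAddCommGroup X] [Lattice X]
    [IsOrderedAddMonoid X] [HasSolidNorm X]
    [NormedSpace ℝ X] [CompleteSpace X] (ε : ℝ) (hε : 0 ≤ ε) (T : X →L[ℝ] X)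
    (hT : IsEpsBandPreserving ε ⇑T) :
    ∀ x y : X, ‖x‖ ≤ 1 → ‖y‖ ≤ 1 → |x| ⊓ |y| = 0 → ‖|T x| ⊓ |T y|‖ ≤ 2 * ε :=
  epsBP_implies_two_eps_DP_general ε hε T hT
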